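/- Let a, b, c be integers with a > b ≥ 0 and c ≥ 0. Then, in ℤ[v, v^{−1}], Σ_{k=0}^{c} (−1)^{c−k} v^{−k(b+c)} [a−b−1+c−k, a−b−1] · [a+c, k] = v^{−c(a+c)} [b+c, c]. -/

import Mathlib

/-!
With `q = v²`, the product formula gives Pascal's rule `[[N,t]] = q^{N-t} [[N-1,t-1]] + [[N-1,t]]`,
hence `[N,t] = v^{N-t} [N-1,t-1] + v^{-t} [N-1,t]`. Applied to the first binomial of each summand,
it shows that the left-hand side `S(a,b,c)` satisfies
`S(a,b,c+1) = v^{c+1} S(a,b+1,c+1) - v^{-(a-b-1)} S(a+1,b+1,c)`,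
and applied to `[b+c+2,c+1]` it shows that the right-hand side satisfies the same recurrence.
Both sides are `1` for `c = 0`, and for `a = b+1` the sum telescopes, so induction on `c` and then
on `a - b - 1` proves the identity.
-/

/-- The variable `v`, viewed inside the field of rational functions (which
contains the Laurent polynomial ring `ℤ[v,v⁻¹]`). -/
noncomputable def vv : RatFunc ℚ := RatFunc.X

/-- The Gaussian polynomial `[[N,t]] = ∏_{i=1}^{t} (v^{2(N-i+1)} - 1)/(v^{2i} - 1)`,
set to `0` when `t < 0` or `t > N`. -/
noncomputable def gauss2 (N t : ℤ) : RatFunc ℚ :=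
  if 0 ≤ t ∧ t ≤ N then
    ∏ i ∈ Finset.range t.toNat, (vv ^ (2 * (N - (i : ℤ))) - 1) / (vv ^ (2 * ((i : ℤ) + 1)) - 1)
  else 0

/-- The symmetric Gaussian binomial `[N,t] = v^{-t(N-t)}·[[N,t]]`. -/
noncomputable def sgauss (N t : ℤ) : RatFunc ℚ := vv ^ (-(t * (N - t))) * gauss2 N t

open Finset

lemma vv_ne_zero : vv ≠ 0 := RatFunc.X_ne_zero

lemma vv_zpow_mul_zpow (m n : ℤ) : vv ^ m * vv ^ n = vv ^ (m + n) :=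
  (zpow_add₀ vv_ne_zero m n).symm

open Polynomial in
lemma vv_zpow_sub_one_ne_zero {n : ℤ} (hn : 0 < n) : vv ^ n - 1 ≠ 0 := by
  lift n to ℕ using hn.le
  have h : vv ^ (n : ℤ) - 1 = algebraMap ℚ[X] (RatFunc ℚ) (X ^ n - C 1) := by
    simp [vv, RatFunc.algebraMap_X]
  rw [h, map_ne_zero_iff _ (IsFractionRing.injective _ _)]
  exact X_pow_sub_C_ne_zero (by omega) 1

lemma gauss2_eq_zero {N t : ℤ} (h : t < 0 ∨ N < t) : gauss2 N t = 0 :=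
  if_neg (by omega)

lemma gauss2_zero_right {N : ℤ} (hN : 0 ≤ N) : gauss2 N 0 = 1 := by
  simp [gauss2, hN]

/-- For `k > n` the product vanishes on its own, through the factor `i = n`. -/
lemma gauss2_natCast (n k : ℕ) : gauss2 n k =
    ∏ i ∈ range k, (vv ^ (2 * ((n : ℤ) - i)) - 1) / (vv ^ (2 * ((i : ℤ) + 1)) - 1) := by
  rw [gauss2]
  split_ifs with h
  · simp
  · exact (prod_eq_zero (i := n) (mem_range.2 (by omega)) (by simp)).symm

lemma gauss2_natCast_succ_succ (n k : ℕ) : gauss2 (n + 1 : ℕ) (k + 1 : ℕ) =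
    vv ^ (2 * ((n : ℤ) - k)) * gauss2 n k + gauss2 n (k + 1 : ℕ) := by
  simp only [gauss2_natCast, prod_div_distrib]
  rw [prod_range_succ' (fun i => vv ^ (2 * (((n + 1 : ℕ) : ℤ) - i)) - 1), prod_range_succ,
    prod_range_succ]
  have hD : ∏ i ∈ range k, (vv ^ (2 * ((i : ℤ) + 1)) - 1) ≠ 0 :=
    prod_ne_zero_iff.2 fun i _ => vv_zpow_sub_one_ne_zero (by omega)
  have hk : vv ^ (2 * ((k : ℤ) + 1)) - 1 ≠ 0 := vv_zpow_sub_one_ne_zero (by omega)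
  have hq :
      vv ^ (2 * ((n : ℤ) - k)) * vv ^ (2 * ((k : ℤ) + 1)) = vv ^ (2 * ((n : ℤ) + 1)) := by
    rw [vv_zpow_mul_zpow]; ring_nf
  push_cast
  simp only [add_sub_add_right_eq_sub, sub_zero]
  field_simp
  linear_combination (-∏ i ∈ range k, (vv ^ (2 * ((n : ℤ) - i)) - 1)) * hq

lemma gauss2_pascal {N : ℤ} (hN : 1 ≤ N) (t : ℤ) :
    gauss2 N t = vv ^ (2 * (N - t)) * gauss2 (N - 1) (t - 1) + gauss2 (N - 1) t := by
  rcases lt_trichotomy t 0 with ht | rfl | ht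
  · simp [gauss2_eq_zero (Or.inl ht), gauss2_eq_zero (Or.inl (by omega : t - 1 < 0))]
  · simp [gauss2_zero_right (by omega : 0 ≤ N), gauss2_zero_right (by omega : 0 ≤ N - 1),
      gauss2_eq_zero (Or.inl (by norm_num : (-1 : ℤ) < 0))]
  · obtain ⟨n, rfl⟩ : ∃ n : ℕ, N = n + 1 := ⟨(N - 1).toNat, by omega⟩
    obtain ⟨k, rfl⟩ : ∃ k : ℕ, t = k + 1 := ⟨(t - 1).toNat, by omega⟩
    simpa using gauss2_natCast_succ_succ n k

lemma gauss2_self {N : ℤ} (hN : 0 ≤ N) : gauss2 N N = 1 := by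
  induction N, hN using Int.leInduction with
  | base => exact gauss2_zero_right le_rfl
  | succ N hN ih =>
    rw [gauss2_pascal (by omega), add_sub_cancel_right, sub_self, mul_zero, zpow_zero, one_mul,
      ih, gauss2_eq_zero (Or.inr (by omega)), add_zero]

lemma sgauss_eq_zero {N t : ℤ} (h : t < 0 ∨ N < t) : sgauss N t = 0 := by
  rw [sgauss, gauss2_eq_zero h, mul_zero]

lemma sgauss_zero_right {N : ℤ} (hN : 0 ≤ N) : sgauss N 0 = 1 := by
  simp [sgauss, gauss2_zero_right hN]

lemma sgauss_self {N : ℤ} (hN : 0 ≤ N) : sgauss N N = 1 := by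
  simp [sgauss, gauss2_self hN]

lemma sgauss_pascal {N : ℤ} (hN : 1 ≤ N) (t : ℤ) :
    sgauss N t = vv ^ (N - t) * sgauss (N - 1) (t - 1) + vv ^ (-t) * sgauss (N - 1) t := by
  have e₁ : vv ^ (-(t * (N - t))) * vv ^ (2 * (N - t)) =
      vv ^ (N - t) * vv ^ (-((t - 1) * (N - 1 - (t - 1)))) := by
    rw [vv_zpow_mul_zpow, vv_zpow_mul_zpow]; ring_nf
  have e₂ : vv ^ (-(t * (N - t))) = vv ^ (-t) * vv ^ (-(t * (N - 1 - t))) := by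
    rw [vv_zpow_mul_zpow]; ring_nf
  simp only [sgauss]
  rw [gauss2_pascal hN]
  linear_combination gauss2 (N - 1) (t - 1) * e₁ + gauss2 (N - 1) t * e₂

lemma sum_Icc_add_one_right {M : Type*} [AddCommMonoid M] {a c : ℤ} (h : a ≤ c + 1)
    (f : ℤ → M) : ∑ k ∈ Icc a (c + 1), f k = ∑ k ∈ Icc a c, f k + f (c + 1) := by
  rw [← insert_Icc_right_eq_Icc_add_one h, sum_insert (by simp), add_comm]

/-- The summands telescope, since by Pascal's rule the `k`-th one is `g (k - 1) + g k`
for `g k = v^{-kN} [N-1,k]`. -/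
lemma sum_neg_one_zpow_mul_sgauss {N : ℤ} (hN : 1 ≤ N) {j : ℤ} (hj : 0 ≤ j) :
    ∑ k ∈ Icc 0 j, (-1 : RatFunc ℚ) ^ (j - k) * vv ^ (-(k * (N - 1))) * sgauss N k =
      vv ^ (-(j * N)) * sgauss (N - 1) j := by
  induction j, hj using Int.leInduction with
  | base =>
    simp [sgauss_zero_right (by omega : 0 ≤ N), sgauss_zero_right (by omega : 0 ≤ N - 1)]
  | succ j hj ih =>
    have hsign : ∀ k, (-1 : RatFunc ℚ) ^ (j + 1 - k) = -(-1) ^ (j - k) := fun k => by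
      rw [show j + 1 - k = j - k + 1 by ring, zpow_add_one₀ (by norm_num)]; ring
    have e₁ : vv ^ (-((j + 1) * (N - 1))) * vv ^ (N - (j + 1)) = vv ^ (-(j * N)) := by
      rw [vv_zpow_mul_zpow]; ring_nf
    have e₂ : vv ^ (-((j + 1) * (N - 1))) * vv ^ (-(j + 1)) = vv ^ (-((j + 1) * N)) := by
      rw [vv_zpow_mul_zpow]; ring_nf
    rw [sum_Icc_add_one_right (by omega), sub_self, zpow_zero, one_mul]
    simp only [hsign, neg_mul, sum_neg_distrib, ih]
    rw [sgauss_pascal hN, add_sub_cancel_right]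
    linear_combination sgauss (N - 1) j * e₁ + sgauss (N - 1) (j + 1) * e₂

noncomputable def sgaussSum (a b c : ℤ) : RatFunc ℚ :=
  ∑ k ∈ Icc (0 : ℤ) c, (-1 : RatFunc ℚ) ^ (c - k) * vv ^ (-(k * (b + c))) *
    sgauss (a - b - 1 + c - k) (a - b - 1) * sgauss (a + c) k

noncomputable def sgaussRhs (a b c : ℤ) : RatFunc ℚ := vv ^ (-(c * (a + c))) * sgauss (b + c) c

lemma sgaussSum_zero_right {a b : ℤ} (hb : 0 ≤ b) (hab : b < a) : sgaussSum a b 0 = 1 := by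
  simp [sgaussSum, sgauss_self (by omega : 0 ≤ a - b - 1), sgauss_zero_right (by omega : 0 ≤ a)]

lemma sgaussRhs_zero_right {a b : ℤ} (hb : 0 ≤ b) : sgaussRhs a b 0 = 1 := by
  simp [sgaussRhs, sgauss_zero_right hb]

lemma sgaussSum_eq_sgaussRhs_of_eq_add_one {a b c : ℤ} (h : a = b + 1) (hb : 0 ≤ b)
    (hc : 0 ≤ c) :
    sgaussSum a b c = sgaussRhs a b c := by
  subst h
  have key := sum_neg_one_zpow_mul_sgauss (N := b + 1 + c) (by omega) hc
  rw [show b + 1 + c - 1 = b + c by ring] at key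
  rw [sgaussSum, sgaussRhs, ← key]
  refine sum_congr rfl fun k hk => ?_
  rw [show b + 1 - b - 1 + c - k = c - k by ring, show b + 1 - b - 1 = 0 by ring,
    sgauss_zero_right (by simp at hk; omega), mul_one]

lemma sgaussSum_add_one {a b c : ℤ} (hab : b + 1 < a) (hc : 0 ≤ c) :
    sgaussSum a b (c + 1) =
      vv ^ (c + 1) * sgaussSum a (b + 1) (c + 1) -
        vv ^ (-(a - b - 1)) * sgaussSum (a + 1) (b + 1) c := by
  have hext : sgaussSum (a + 1) (b + 1) c = ∑ k ∈ Icc 0 (c + 1),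
      (-1 : RatFunc ℚ) ^ (c - k) * vv ^ (-(k * (b + 1 + c))) *
        sgauss (a + 1 - (b + 1) - 1 + c - k) (a + 1 - (b + 1) - 1) * sgauss (a + 1 + c) k := by
    rw [sum_Icc_add_one_right (by omega), sgauss_eq_zero (Or.inr (by omega)), mul_zero, zero_mul,
      add_zero, sgaussSum]
  rw [hext, sgaussSum, sgaussSum, mul_sum, mul_sum, ← sum_sub_distrib]
  refine sum_congr rfl fun k hmem => ?_
  have hk : k ≤ c + 1 := (mem_Icc.1 hmem).2
  have hsign : (-1 : RatFunc ℚ) ^ (c + 1 - k) = -(-1) ^ (c - k) := by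
    rw [show c + 1 - k = c - k + 1 by ring, zpow_add_one₀ (by norm_num)]; ring
  have e₁ : vv ^ (a - b - 1 + (c + 1) - k - (a - b - 1)) * vv ^ (-(k * (b + (c + 1)))) =
      vv ^ (c + 1) * vv ^ (-(k * (b + 1 + (c + 1)))) := by
    rw [vv_zpow_mul_zpow, vv_zpow_mul_zpow]; ring_nf
  have h₁ : sgauss (a - (b + 1) - 1 + (c + 1) - k) (a - (b + 1) - 1) =
      sgauss (a - b - 1 + (c + 1) - k - 1) (a - b - 1 - 1) := by congr 1 <;> ring
  have h₂ : sgauss (a + 1 - (b + 1) - 1 + c - k) (a + 1 - (b + 1) - 1) =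
      sgauss (a - b - 1 + (c + 1) - k - 1) (a - b - 1) := by congr 1 <;> ring
  rw [sgauss_pascal (by omega), h₁, h₂, hsign, show b + 1 + c = b + (c + 1) by ring,
    show a + 1 + c = a + (c + 1) by ring]
  linear_combination (-((-1) ^ (c - k) * sgauss (a + (c + 1)) k *
    sgauss (a - b - 1 + (c + 1) - k - 1) (a - b - 1 - 1))) * e₁

lemma sgaussRhs_add_one {a b c : ℤ} (hbc : -1 ≤ b + c) :
    sgaussRhs a b (c + 1) =
      vv ^ (c + 1) * sgaussRhs a (b + 1) (c + 1) -
        vv ^ (-(a - b - 1)) * sgaussRhs (a + 1) (b + 1) c := by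
  have e₁ : vv ^ (c + 1) * vv ^ (-((c + 1) * (a + (c + 1)))) * vv ^ (b + 1 + (c + 1) - (c + 1)) =
      vv ^ (-(a - b - 1)) * vv ^ (-(c * (a + 1 + c))) := by
    rw [vv_zpow_mul_zpow, vv_zpow_mul_zpow, vv_zpow_mul_zpow]; ring_nf
  have e₂ : vv ^ (c + 1) * vv ^ (-((c + 1) * (a + (c + 1)))) * vv ^ (-(c + 1)) =
      vv ^ (-((c + 1) * (a + (c + 1)))) := by
    rw [vv_zpow_mul_zpow, vv_zpow_mul_zpow]; ring_nf
  rw [sgaussRhs, sgaussRhs, sgaussRhs, sgauss_pascal (N := b + 1 + (c + 1)) (by omega),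
    show b + 1 + (c + 1) - 1 = b + (c + 1) by ring, show c + 1 - 1 = c by ring,
    show b + 1 + c = b + (c + 1) by ring]
  linear_combination (-sgauss (b + (c + 1)) c) * e₁ - sgauss (b + (c + 1)) (c + 1) * e₂

lemma sgaussSum_eq_sgaussRhs {c : ℤ} (hc : 0 ≤ c) :
    ∀ (m : ℕ) (a b : ℤ), a = b + m + 1 → 0 ≤ b → sgaussSum a b c = sgaussRhs a b c := by
  induction c, hc using Int.leInduction with
  | base =>
    intro m a b hab hb
    rw [sgaussSum_zero_right hb (by omega), sgaussRhs_zero_right hb]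
  | succ c hc ihc =>
    intro m
    induction m with
    | zero =>
      intro a b hab hb
      exact sgaussSum_eq_sgaussRhs_of_eq_add_one (by simpa using hab) hb (by omega)
    | succ m ihm =>
      intro a b hab hb
      push_cast at hab
      rw [sgaussSum_add_one (by omega) hc, sgaussRhs_add_one (by omega),
        ihm a (b + 1) (by omega) (by omega),
        ihc (m + 1) (a + 1) (b + 1) (by push_cast; omega) (by omega)]

theorem gauss_identity_three (a b c : ℤ) (hab : b < a) (hb : 0 ≤ b) (hc : 0 ≤ c) :
    ∑ k ∈ Finset.Icc (0 : ℤ) c,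
        (-1 : RatFunc ℚ) ^ (c - k) * vv ^ (-(k * (b + c))) *
          sgauss (a - b - 1 + c - k) (a - b - 1) * sgauss (a + c) k =
      vv ^ (-(c * (a + c))) * sgauss (b + c) c :=
  sgaussSum_eq_sgaussRhs hc (a - b - 1).toNat a b (by omega) hb
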